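/- Let G be a good colored graph and let C_1, C_2, ..., C_k be pairwise edge-disjoint rainbow cycles in G such that the graph obtained from G by deleting the edges of all of C_1, ..., C_k is a good colored graph. Then the graph G \ C_1 obtained by deleting only the edges of C_1 is also a good colored graph. -/

import Mathlib

open scoped Classical

noncomputable section

/-- The degree of a vertex: the number of its neighbors. -/
noncomputable def vdeg {V : Type*} (G : SimpleGraph V) (x : V) : ℕ :=
  (G.neighborSet x).ncard

/-- The color degree of a vertex: the number of distinct colors on its incident edges. -/
noncomputable def colorDeg {V C : Type*} (G : SimpleGraph V) (c : Sym2 V → C) (x : V) : ℕ :=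
  {α : C | ∃ y, G.Adj x y ∧ c s(x, y) = α}.ncard

/-- Every triangle of `G` is monochromatic or rainbow. -/
def TriCond {V C : Type*} (G : SimpleGraph V) (c : Sym2 V → C) : Prop :=
  ∀ x y z : V, G.Adj x y → G.Adj y z → G.Adj x z →
    (c s(x, y) = c s(y, z) ∧ c s(y, z) = c s(x, z)) ∨
    (c s(x, y) ≠ c s(y, z) ∧ c s(y, z) ≠ c s(x, z) ∧ c s(x, y) ≠ c s(x, z))

/-- `v` is a cut vertex of Type X: it has degree 4, and there are pseudoblocks at `v`
(vertex sets `A`, `B` covering `V` with `A ∩ B = {v}` and every edge lying within `A` or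
within `B`) such that `v` has two edges into each pseudoblock, the two edges into each
pseudoblock having the same color. (Such a vertex is automatically a cut vertex, since
any path between the two sides must pass through `v`.) -/
def IsTypeX {V C : Type*} (G : SimpleGraph V) (c : Sym2 V → C) (v : V) : Prop :=
  vdeg G v = 4 ∧
  ∃ A B : Set V, A ∪ B = Set.univ ∧ A ∩ B = {v} ∧
    (∀ e ∈ G.edgeSet, (∀ x ∈ e, x ∈ A) ∨ (∀ x ∈ e, x ∈ B)) ∧
    (∃ a₁ a₂ : V, a₁ ≠ a₂ ∧ a₁ ∈ A ∧ a₂ ∈ A ∧ G.Adj v a₁ ∧ G.Adj v a₂ ∧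
      c s(v, a₁) = c s(v, a₂)) ∧
    (∃ b₁ b₂ : V, b₁ ≠ b₂ ∧ b₁ ∈ B ∧ b₂ ∈ B ∧ G.Adj v b₁ ∧ G.Adj v b₂ ∧
      c s(v, b₁) = c s(v, b₂))

/-- Properties (1)-(5) of a good colored graph: every vertex has even degree, maximum
degree at most 4, every triangle is rainbow or monochromatic, every nonisolated vertex
has color degree exactly 2, and each color class spans at most three vertices. -/
def IsGoodCore {V C : Type*} (G : SimpleGraph V) (c : Sym2 V → C) : Prop :=
  (∀ x, Even (vdeg G x)) ∧ (∀ x, vdeg G x ≤ 4) ∧ TriCond G c ∧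
  (∀ x, vdeg G x ≠ 0 → colorDeg G c x = 2) ∧
  (∀ α : C, {x : V | ∃ y, G.Adj x y ∧ c s(x, y) = α}.ncard ≤ 3)

/-- A good colored graph: properties (1)-(5) together with (6): no cut vertex of Type X. -/
def IsGood {V C : Type*} (G : SimpleGraph V) (c : Sym2 V → C) : Prop :=
  IsGoodCore G c ∧ ∀ v, ¬ IsTypeX G c v

/-!
Deleting a rainbow cycle `C₀` keeps (1)–(5): degrees drop by `0` or `2`, and at a vertex of
degree 4 whose two colours each occupy two edges (a colour class spans at most three vertices),
the two deleted edges have different colours, so one edge of each colour survives.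
For (6), a Type X vertex `v` of `G \ C₀` has degree 4 there, hence lies on no edge of `C₀`.
If `v` lies on some `Cᵢ`, that cycle survives in `G \ C₀` and, being unable to cross the
separation at `v`, leaves and re-enters `v` on one side, through two edges of the same colour;
this contradicts rainbowness. Otherwise `v` keeps all its edges in `G \ ⋃ Cᵢ`, and the same
separation makes it a Type X vertex there.
-/

open SimpleGraph

section Combinatorics

variable {α β : Type*}

/-- Two colours, each on at most two of four points: removing one point of each colour
leaves one point of each colour. -/
lemma ncard_image_diff_pair_eq_two {N : Set α} {f : α → β} {w z : α} (hN : N.ncard = 4)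
    (himg : (f '' N).ncard = 2) (hfib : ∀ γ, {y ∈ N | f y = γ}.ncard ≤ 2)
    (hw : w ∈ N) (hz : z ∈ N) (hwz : f w ≠ f z) :
    (f '' (N \ {w, z})).ncard = 2 := by
  have hfin : N.Finite := Set.finite_of_ncard_ne_zero (by omega)
  have hrest : (N \ {w, z}).ncard = 2 := by
    rw [Set.ncard_sdiff (Set.pair_subset hw hz), hN,
      Set.ncard_pair (fun h => hwz (congrArg f h))]
  obtain ⟨y₁, y₂, hy₁₂, hrest_eq⟩ := Set.ncard_eq_two.mp hrest
  have hy₁ : y₁ ∈ N \ {w, z} := hrest_eq ▸ Set.mem_insert _ _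
  have hy₂ : y₂ ∈ N \ {w, z} := hrest_eq ▸ Set.mem_insert_of_mem _ rfl
  rw [hrest_eq, Set.image_pair]
  refine Set.ncard_pair fun hcol => ?_
  have hcolours : f '' N = {f w, f z} := by
    refine (Set.eq_of_subset_of_ncard_le ?_ ?_ (hfin.image f)).symm
    · exact Set.pair_subset (Set.mem_image_of_mem f hw) (Set.mem_image_of_mem f hz)
    · rw [himg, Set.ncard_pair hwz]
  -- otherwise the colour of `y₁` and `y₂` would sit on three points
  obtain ⟨u, hu, hucol⟩ : ∃ u ∈ ({w, z} : Set α), f y₁ = f u := by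
    have : f y₁ ∈ f '' N := Set.mem_image_of_mem f hy₁.1
    rw [hcolours] at this
    rcases this with h | h
    exacts [⟨w, Or.inl rfl, h⟩, ⟨z, Or.inr rfl, h⟩]
  have hsub : {u, y₁, y₂} ⊆ {y ∈ N | f y = f u} := by
    rintro _ (rfl | rfl | rfl)
    · exact ⟨Set.pair_subset hw hz hu, rfl⟩
    · exact ⟨hy₁.1, hucol⟩
    · exact ⟨hy₂.1, hcol ▸ hucol⟩
  have hu₁ : u ≠ y₁ := fun h => hy₁.2 (h ▸ hu)
  have hu₂ : u ≠ y₂ := fun h => hy₂.2 (h ▸ hu)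
  have := (Set.ncard_le_ncard hsub (hfin.subset fun _ h => h.1)).trans (hfib (f u))
  rw [Set.ncard_insert_of_notMem (by simp [hu₁, hu₂]), Set.ncard_pair hy₁₂] at this
  omega

end Combinatorics

section Subgraph

variable {V C : Type*} {G H : SimpleGraph V} {c : Sym2 V → C}

lemma SimpleGraph.neighborSet_deleteEdges (s : Set (Sym2 V)) (v : V) :
    (G.deleteEdges s).neighborSet v = G.neighborSet v \ {w | s(v, w) ∈ s} := by
  ext w
  simp [deleteEdges_adj]

lemma colorDeg_eq_ncard_image (x : V) :
    colorDeg G c x = ((fun y => c s(x, y)) '' G.neighborSet x).ncard := rfl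

lemma vdeg_mono [Finite V] (h : H ≤ G) (x : V) : vdeg H x ≤ vdeg G x :=
  Set.ncard_le_ncard (neighborSet_mono h x)

lemma TriCond.anti (hG : TriCond G c) (h : H ≤ G) : TriCond H c :=
  fun x y z hxy hyz hxz => hG x y z (h hxy) (h hyz) (h hxz)

lemma ncard_colorClass_mono [Finite V] (h : H ≤ G) (γ : C) :
    {x : V | ∃ y, H.Adj x y ∧ c s(x, y) = γ}.ncard ≤
      {x : V | ∃ y, G.Adj x y ∧ c s(x, y) = γ}.ncard :=
  Set.ncard_le_ncard fun _ ⟨y, hy, hc⟩ => ⟨y, h hy, hc⟩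

lemma ncard_colorFiber_le_two [Finite V] {γ : C}
    (hspan : {x : V | ∃ y, G.Adj x y ∧ c s(x, y) = γ}.ncard ≤ 3) (x : V) :
    {y ∈ G.neighborSet x | c s(x, y) = γ}.ncard ≤ 2 := by
  rcases Set.eq_empty_or_nonempty {y ∈ G.neighborSet x | c s(x, y) = γ} with hem | ⟨y₀, hy₀⟩
  · rw [hem, Set.ncard_empty]; omega
  have hsub : insert x {y ∈ G.neighborSet x | c s(x, y) = γ} ⊆
      {x : V | ∃ y, G.Adj x y ∧ c s(x, y) = γ} := by
    rintro p (rfl | ⟨hp, hpc⟩)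
    · exact ⟨y₀, hy₀⟩
    · exact ⟨x, hp.symm, Sym2.eq_swap ▸ hpc⟩
  have hx : x ∉ {y ∈ G.neighborSet x | c s(x, y) = γ} := fun h => G.irrefl h.1
  have := (Set.ncard_le_ncard hsub).trans hspan
  rw [Set.ncard_insert_of_notMem hx] at this
  omega

end Subgraph

section Cycle

variable {V C : Type*} {G : SimpleGraph V} {c : Sym2 V → C} {u u' v : V}

lemma SimpleGraph.Walk.setOf_mem_edges_eq_empty {p : G.Walk u u'} (hv : v ∉ p.support) :
    {w | s(v, w) ∈ p.edges} = ∅ :=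
  Set.eq_empty_of_forall_notMem fun _ h => hv (p.fst_mem_support_of_mem_edges h)

lemma SimpleGraph.Walk.IsCycle.ncard_setOf_mem_edges {p : G.Walk u u} (hp : p.IsCycle)
    (hv : v ∈ p.support) : {w | s(v, w) ∈ p.edges}.ncard = 2 := by
  have hnbr : p.toSubgraph.neighborSet v = {w | s(v, w) ∈ p.edges} :=
    Set.ext fun _ => Walk.adj_toSubgraph_iff_mem_edges
  rw [← hnbr, hp.ncard_neighborSet_toSubgraph_eq_two hv]

lemma vdeg_deleteEdges_add [Finite V] (p : G.Walk u u') (v : V) :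
    vdeg (G.deleteEdges {e | e ∈ p.edges}) v + {w | s(v, w) ∈ p.edges}.ncard = vdeg G v := by
  rw [vdeg, vdeg, neighborSet_deleteEdges]
  exact Set.ncard_sdiff_add_ncard_of_subset fun _ h => p.adj_of_mem_edges h

lemma IsGoodCore.deleteEdges_of_isCycle [Finite V] (hG : IsGoodCore G c) {p : G.Walk u u}
    (hp : p.IsCycle) (hrb : (p.edges.map c).Nodup) :
    IsGoodCore (G.deleteEdges {e | e ∈ p.edges}) c := by
  obtain ⟨hev, hdeg, htri, hcd, hspan⟩ := hG
  have hle := G.deleteEdges_le {e | e ∈ p.edges}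
  have hvdeg := vdeg_deleteEdges_add p
  refine ⟨fun x => ?_, fun x => (vdeg_mono hle x).trans (hdeg x), htri.anti hle, fun x hx => ?_,
    fun γ => (ncard_colorClass_mono hle γ).trans (hspan γ)⟩
  · by_cases hxp : x ∈ p.support
    · have := hvdeg x
      rw [hp.ncard_setOf_mem_edges hxp] at this
      exact (Nat.even_add.mp (this ▸ hev x)).mpr even_two
    · have := hvdeg x
      rw [Walk.setOf_mem_edges_eq_empty hxp, Set.ncard_empty, add_zero] at this
      exact this ▸ hev x
  · simp only [colorDeg_eq_ncard_image, neighborSet_deleteEdges, Set.mem_ofPred_eq]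
    by_cases hxp : x ∈ p.support
    · obtain ⟨w, z, hwz, hpair⟩ := Set.ncard_eq_two.mp (hp.ncard_setOf_mem_edges hxp)
      have hw : s(x, w) ∈ p.edges := (Set.ext_iff.mp hpair w).mpr (Set.mem_insert w {z})
      have hz : s(x, z) ∈ p.edges := (Set.ext_iff.mp hpair z).mpr (Set.mem_insert_of_mem w rfl)
      have h4 : vdeg G x = 4 := by
        have := hvdeg x
        rw [hp.ncard_setOf_mem_edges hxp] at this
        obtain ⟨m, hm⟩ := hev x
        have := hdeg x
        omega
      rw [hpair]
      exact ncard_image_diff_pair_eq_two h4 (hcd x (by omega))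
        (fun γ => ncard_colorFiber_le_two (hspan γ) x) (p.adj_of_mem_edges hw)
        (p.adj_of_mem_edges hz)
        fun h => hwz (Sym2.congr_right.mp (List.inj_on_of_nodup_map hrb hw hz h))
    · have := hvdeg x
      rw [Walk.setOf_mem_edges_eq_empty hxp, Set.ncard_empty, add_zero] at this
      rw [Walk.setOf_mem_edges_eq_empty hxp, Set.sdiff_empty]
      exact hcd x (this ▸ hx)

end Cycle

section TypeX

variable {V C : Type*} {G H : SimpleGraph V} {c : Sym2 V → C} {A B : Set V} {v : V}

lemma SimpleGraph.Walk.end_mem_of_forall_mem_edges_side (hAB : A ∩ B = {v}) {z w : V}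
    (r : G.Walk z w) (hv : v ∉ r.support)
    (hside : ∀ e ∈ r.edges, (∀ x ∈ e, x ∈ A) ∨ (∀ x ∈ e, x ∈ B)) (hz : z ∈ A) : w ∈ A := by
  induction r with
  | nil => exact hz
  | @cons a b _ hab r ih =>
    rw [Walk.support_cons, List.mem_cons, not_or] at hv
    refine ih hv.2 (fun e he => hside e (by simp [he])) ?_
    rcases hside s(a, b) (by simp) with hA | hB
    · exact hA b (Sym2.mem_mk_right a b)
    · exact absurd (hAB ▸ ⟨hz, hB a (Sym2.mem_mk_left a b)⟩ : a ∈ ({v} : Set V)) (Ne.symm hv.1)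

lemma SimpleGraph.Walk.IsPath.end_mem_of_snd_mem (hAB : A ∩ B = {v}) {w : V} {r : G.Walk v w}
    (hr : r.IsPath) (hside : ∀ e ∈ r.edges, (∀ x ∈ e, x ∈ A) ∨ (∀ x ∈ e, x ∈ B))
    (hsnd : r.snd ∈ A) : w ∈ A := by
  cases r with
  | nil => exact hsnd
  | cons hadj r =>
    have hv : v ∉ r.support :=
      (List.nodup_cons.mp (Walk.support_cons hadj r ▸ hr.support_nodup)).1
    exact r.end_mem_of_forall_mem_edges_side hAB hv (fun e he => hside e (by simp [he]))
      (r.snd_cons hadj ▸ hsnd)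

lemma SimpleGraph.Walk.IsCycle.snd_mem_of_penultimate_mem (hAB : A ∩ B = {v}) {p : G.Walk v v}
    (hp : p.IsCycle) (hside : ∀ e ∈ p.edges, (∀ x ∈ e, x ∈ A) ∨ (∀ x ∈ e, x ∈ B))
    (hpen : p.penultimate ∈ A) : p.snd ∈ A := by
  cases p with
  | nil => exact absurd hp Walk.not_isCycle_nil
  | cons hadj q =>
    have hq : q.IsPath := ((Walk.cons_isCycle_iff q hadj).mp hp).1
    have hqnil : ¬ q.Nil := fun h => hadj.ne (Walk.Nil.eq h).symm
    rw [Walk.penultimate_cons_of_not_nil hadj q hqnil, ← Walk.snd_reverse] at hpen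
    rw [Walk.snd_cons]
    exact hq.reverse.end_mem_of_snd_mem hAB
      (fun e he => hside e (by simp [Walk.edges_reverse] at he; simp [he])) hpen

lemma eq_or_eq_of_adj_of_mem_side [Finite V] (h4 : vdeg H v = 4) (hAB : A ∩ B = {v})
    {a₁ a₂ b₁ b₂ y : V} (ha : a₁ ≠ a₂) (ha₁ : a₁ ∈ A) (ha₂ : a₂ ∈ A) (hb : b₁ ≠ b₂)
    (hb₁ : b₁ ∈ B) (hb₂ : b₂ ∈ B) (hva₁ : H.Adj v a₁) (hva₂ : H.Adj v a₂) (hvb₁ : H.Adj v b₁)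
    (hvb₂ : H.Adj v b₂) (hvy : H.Adj v y) (hy : y ∈ A) : y = a₁ ∨ y = a₂ := by
  by_contra! hya
  have hne : ∀ x ∈ A, ∀ x' ∈ B, H.Adj v x → x ≠ x' := fun x hx x' hx' hvx hxx' =>
    hvx.ne' (Set.mem_singleton_iff.mp (hAB ▸ ⟨hx, hxx' ▸ hx'⟩))
  have hsub : {y, a₁, a₂, b₁, b₂} ⊆ H.neighborSet v := by
    rintro _ (rfl | rfl | rfl | rfl | rfl) <;> assumption
  have := Set.ncard_le_ncard hsub
  rw [← vdeg, h4, Set.ncard_insert_of_notMem, Set.ncard_insert_of_notMem,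
    Set.ncard_insert_of_notMem, Set.ncard_pair hb] at this
  · omega
  · simp [hne a₂ ha₂ b₁ hb₁ hva₂, hne a₂ ha₂ b₂ hb₂ hva₂]
  · simp [ha, hne a₁ ha₁ b₁ hb₁ hva₁, hne a₁ ha₁ b₂ hb₂ hva₁]
  · simp [hya.1, hya.2, hne y hy b₁ hb₁ hvy, hne y hy b₂ hb₂ hvy]

lemma IsTypeX.of_le_of_neighborSet_eq (hX : IsTypeX G c v) (hle : H ≤ G)
    (hN : H.neighborSet v = G.neighborSet v) : IsTypeX H c v := by
  obtain ⟨h4, A, B, hU, hI, hE, ⟨a₁, a₂, ha, ha₁, ha₂, hva₁, hva₂, hca⟩,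
    ⟨b₁, b₂, hb, hb₁, hb₂, hvb₁, hvb₂, hcb⟩⟩ := hX
  have hadj : ∀ y, G.Adj v y → H.Adj v y := fun y h => (Set.ext_iff.mp hN y).mpr h
  exact ⟨by rw [vdeg, hN, ← vdeg, h4], A, B, hU, hI, fun e he => hE e (edgeSet_mono hle he),
    ⟨a₁, a₂, ha, ha₁, ha₂, hadj _ hva₁, hadj _ hva₂, hca⟩,
    ⟨b₁, b₂, hb, hb₁, hb₂, hadj _ hvb₁, hadj _ hvb₂, hcb⟩⟩

lemma IsTypeX.not_nodup_map_edges_of_isCycle [Finite V] (hX : IsTypeX H c v) {p : G.Walk v v}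
    (hp : p.IsCycle) (hpH : ∀ e ∈ p.edges, e ∈ H.edgeSet) : ¬ (p.edges.map c).Nodup := by
  obtain ⟨h4, A, B, hU, hI, hE, hA, hB⟩ := hX
  have hw : s(v, p.snd) ∈ p.edges :=
    Walk.adj_toSubgraph_iff_mem_edges.mp (p.toSubgraph_adj_snd hp.not_nil)
  have hz : s(v, p.penultimate) ∈ p.edges := Sym2.eq_swap ▸
    Walk.adj_toSubgraph_iff_mem_edges.mp (p.toSubgraph_adj_penultimate hp.not_nil)
  have hside := fun e he => hE e (hpH e he)
  have key : ∀ {S T : Set V}, S ∩ T = {v} →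
      (∃ a₁ a₂, a₁ ≠ a₂ ∧ a₁ ∈ S ∧ a₂ ∈ S ∧ H.Adj v a₁ ∧ H.Adj v a₂ ∧ c s(v, a₁) = c s(v, a₂)) →
      (∃ b₁ b₂, b₁ ≠ b₂ ∧ b₁ ∈ T ∧ b₂ ∈ T ∧ H.Adj v b₁ ∧ H.Adj v b₂ ∧ c s(v, b₁) = c s(v, b₂)) →
      (∀ e ∈ p.edges, (∀ x ∈ e, x ∈ S) ∨ (∀ x ∈ e, x ∈ T)) →
      p.penultimate ∈ S → c s(v, p.snd) = c s(v, p.penultimate) := by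
    rintro S T hST ⟨a₁, a₂, ha, ha₁, ha₂, hva₁, hva₂, hca⟩ ⟨b₁, b₂, hb, hb₁, hb₂, hvb₁, hvb₂, -⟩
      hside hzS
    have hwS := hp.snd_mem_of_penultimate_mem hST hside hzS
    rcases eq_or_eq_of_adj_of_mem_side h4 hST ha ha₁ ha₂ hb hb₁ hb₂ hva₁ hva₂ hvb₁ hvb₂
        (y := p.snd) (hpH _ hw) hwS with hw' | hw' <;>
      rcases eq_or_eq_of_adj_of_mem_side h4 hST ha ha₁ ha₂ hb hb₁ hb₂ hva₁ hva₂ hvb₁ hvb₂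
        (y := p.penultimate) (hpH _ hz) hzS with hz' | hz' <;>
      simp [hw', hz', hca]
  have hcol : c s(v, p.snd) = c s(v, p.penultimate) := by
    rcases (hU ▸ Set.mem_univ p.penultimate : p.penultimate ∈ A ∪ B) with hzA | hzB
    · exact key hI hA hB hside hzA
    · exact key (Set.inter_comm A B ▸ hI) hB hA (fun e he => (hside e he).symm) hzB
  exact fun hrb => hp.snd_ne_penultimate
    (Sym2.congr_right.mp (List.inj_on_of_nodup_map hrb hw hz hcol))

end TypeX

theorem delete_first_of_good_family_general {V C : Type*} [Fintype V]
    (G : SimpleGraph V) (c : Sym2 V → C) (hG : IsGood G c)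
    (k : ℕ) (Cs : Fin (k + 1) → ((u : V) × G.Walk u u))
    (hcyc : ∀ i, (Cs i).2.IsCycle)
    (hrb : ∀ i, ((Cs i).2.edges.map c).Nodup)
    (hdisj : ∀ i j, i ≠ j → ∀ e ∈ (Cs i).2.edges, e ∉ (Cs j).2.edges)
    (hall : IsGood (G.deleteEdges {e | ∃ i, e ∈ (Cs i).2.edges}) c) :
    IsGood (G.deleteEdges {e | e ∈ (Cs 0).2.edges}) c := by
  refine ⟨hG.1.deleteEdges_of_isCycle (hcyc 0) (hrb 0), fun v hv => ?_⟩
  have hv₀ : v ∉ (Cs 0).2.support := fun hmem => by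
    have := vdeg_deleteEdges_add (Cs 0).2 v
    rw [(hcyc 0).ncard_setOf_mem_edges hmem, hv.1] at this
    have := hG.1.2.1 v
    omega
  by_cases hon : ∃ i, v ∈ (Cs i).2.support
  · obtain ⟨i, hi⟩ := hon
    have hi0 : i ≠ 0 := by rintro rfl; exact hv₀ hi
    have hrot := (Cs i).2.rotate_edges v hi
    refine hv.not_nodup_map_edges_of_isCycle ((hcyc i).rotate hi) (fun e he => ?_)
      ((hrot.map c).nodup_iff.mpr (hrb i))
    rw [hrot.mem_iff] at he
    rw [edgeSet_deleteEdges]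
    exact ⟨(Cs i).2.edges_subset_edgeSet he, hdisj i 0 hi0 e he⟩
  · push Not at hon
    refine hall.2 v (hv.of_le_of_neighborSet_eq (deleteEdges_anti fun e he => ⟨0, he⟩) ?_)
    have hnone : ∀ w, s(v, w) ∉ {e | ∃ i, e ∈ (Cs i).2.edges} :=
      fun w ⟨i, hw⟩ => hon i ((Cs i).2.fst_mem_support_of_mem_edges hw)
    rw [neighborSet_deleteEdges, neighborSet_deleteEdges]
    congr 1
    ext w
    exact ⟨fun h => absurd h (hnone w), fun h => absurd ⟨0, h⟩ (hnone w)⟩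

/-- If `C₀, …, Cₖ` are pairwise edge-disjoint rainbow cycles of a good colored graph
`G` such that deleting the edges of all of them leaves a good colored graph, then
deleting only the edges of `C₀` also leaves a good colored graph. -/
theorem delete_first_of_good_family {V C : Type*} [Fintype V] [DecidableEq V]
    (G : SimpleGraph V) (c : Sym2 V → C) (hG : IsGood G c)
    (k : ℕ) (Cs : Fin (k + 1) → ((u : V) × G.Walk u u))
    (hcyc : ∀ i, (Cs i).2.IsCycle)
    (hrb : ∀ i, ((Cs i).2.edges.map c).Nodup)
    (hdisj : ∀ i j, i ≠ j → ∀ e ∈ (Cs i).2.edges, e ∉ (Cs j).2.edges)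
    (hall : IsGood (G.deleteEdges {e | ∃ i, e ∈ (Cs i).2.edges}) c) :
    IsGood (G.deleteEdges {e | e ∈ (Cs 0).2.edges}) c :=
  delete_first_of_good_family_general G c hG k Cs hcyc hrb hdisj hall
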